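/- Consider the model D = P[0,1] and let ν ∈ P[0,1] with m(ν) the minimum of its closed support. Then the function x ↦ Linf<(x,ν) is finite and continuous on the interval (m(ν), +∞), and Linf<(μ,ν) = Linf≤(μ,ν) for every μ ≠ m(ν). -/

import Mathlib

open MeasureTheory Filter Set ProbabilityTheory
open scoped ENNReal NNReal

noncomputable section

/-- Mean of a (probability) measure on ℝ. -/
def Emean (ν : Measure ℝ) : ℝ := ∫ x, x ∂ν

open Classical in
/-- Kullback–Leibler divergence `∫ ln (dζ/dν) dζ`, equal to `+∞` if `ζ` is not absolutely
continuous with respect to `ν` (or the integral is not defined). -/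
def KL (ζ ν : Measure ℝ) : ℝ≥0∞ :=
  if ζ ≪ ν ∧ Integrable (fun x => Real.log ((ζ.rnDeriv ν x).toReal)) ζ
  then ENNReal.ofReal (∫ x, Real.log ((ζ.rnDeriv ν x).toReal) ∂ζ)
  else ⊤

/-- Log-moment generating function `φ_ν`, with values in `EReal` (so that `+∞` is allowed). -/
def logMgf (ν : Measure ℝ) (l : ℝ) : EReal :=
  ENNReal.log (∫⁻ x, ENNReal.ofReal (Real.exp (l * x)) ∂ν)

/-- Fenchel–Legendre transform `φ*_ν(x) = sup_λ (λ x − φ_ν(λ))`. -/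
def phiStar (ν : Measure ℝ) (x : ℝ) : EReal :=
  ⨆ l : ℝ, ((l * x : ℝ) : EReal) - logMgf ν l

/-- `Φ(ν', ν) = inf_{x ∈ [E(ν'), E(ν)]} (φ*_{ν'}(x) + φ*_ν(x))`. -/
def Phi (ν' ν : Measure ℝ) : EReal :=
  ⨅ x ∈ Set.Icc (Emean ν') (Emean ν), (phiStar ν' x + phiStar ν x)

/-- The model `P[0,1]` of all Borel probability measures on `[0,1]` (seen as measures on ℝ). -/
def Pcc : Set (Measure ℝ) :=
  {ζ | IsProbabilityMeasure ζ ∧ ζ (Set.Icc (0:ℝ) 1)ᶜ = 0}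

/-- `Linf<(x, ν) = inf {KL(ζ, ν) : ζ ∈ D, E(ζ) < x}`, with `inf ∅ = +∞`. -/
def Linflt (D : Set (Measure ℝ)) (x : ℝ) (ν : Measure ℝ) : ℝ≥0∞ :=
  ⨅ ζ ∈ {ζ ∈ D | Emean ζ < x}, KL ζ ν

/-- `Linf≤(x, ν) = inf {KL(ζ, ν) : ζ ∈ D, E(ζ) ≤ x}`, with `inf ∅ = +∞`. -/
def Linfle (D : Set (Measure ℝ)) (x : ℝ) (ν : Measure ℝ) : ℝ≥0∞ :=
  ⨅ ζ ∈ {ζ ∈ D | Emean ζ ≤ x}, KL ζ ν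

/-- `Linf>(x, ν) = inf {KL(ζ, ν) : ζ ∈ D, E(ζ) > x}`, with `inf ∅ = +∞`. -/
def Linfgt (D : Set (Measure ℝ)) (x : ℝ) (ν : Measure ℝ) : ℝ≥0∞ :=
  ⨅ ζ ∈ {ζ ∈ D | x < Emean ζ}, KL ζ ν

/-- `Linf≥(x, ν) = inf {KL(ζ, ν) : ζ ∈ D, E(ζ) ≥ x}`, with `inf ∅ = +∞`. -/
def Linfge (D : Set (Measure ℝ)) (x : ℝ) (ν : Measure ℝ) : ℝ≥0∞ :=
  ⨅ ζ ∈ {ζ ∈ D | x ≤ Emean ζ}, KL ζ ν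

/-- Closed support of a measure on ℝ. -/
def msupport (ν : Measure ℝ) : Set ℝ := {x | ∀ U ∈ nhds x, ν U ≠ 0}

/-- Lower end `m(ν)` of the closed support of `ν`. -/
def mMin (ν : Measure ℝ) : ℝ := sInf (msupport ν)

/-- Upper end `M(ν)` of the closed support of `ν`. -/
def mMax (ν : Measure ℝ) : ℝ := sSup (msupport ν)

/-! The model `P[0,1]` is convex and `KL(·, ν)` is convex in its first argument (it is the
`f`-divergence of `x log x + 1 - x`), so mixing near-optimal measures shows that
`x ↦ Linf<(x, ν)` is convex. For `m(ν) < t < x` the measure `ν` conditioned on `(-∞, t)` has mean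
at most `t` and bounded density, so `Linf<(x, ν)` is finite; a finite convex function on an open
interval is continuous. Right-continuity at `μ > m(ν)` gives `Linf<(μ, ν) ≤ Linf≤(μ, ν)`, while
below `m(ν)` both infima are `+∞`, since a measure with finite divergence is absolutely continuous
with respect to `ν` and so has mean at least `m(ν)`. -/

open InformationTheory

section KLDivConvex

variable {α : Type*} [MeasurableSpace α] {μ₁ μ₂ ν : Measure α}
  [IsFiniteMeasure μ₁] [IsFiniteMeasure μ₂] [IsFiniteMeasure ν]

lemma rnDeriv_smul_add_smul (a b : ℝ≥0) :
    (a • μ₁ + b • μ₂).rnDeriv ν =ᵐ[ν] fun x ↦ a * μ₁.rnDeriv ν x + b * μ₂.rnDeriv ν x := by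
  filter_upwards [Measure.rnDeriv_add (a • μ₁) (b • μ₂) ν, Measure.rnDeriv_smul_left' μ₁ ν a,
    Measure.rnDeriv_smul_left' μ₂ ν b] with x hx h₁ h₂
  rw [hx, Pi.add_apply, h₁, h₂]
  rfl

lemma klDiv_smul_add_smul_le {a b : ℝ≥0} (ha : a ≠ 0) (hb : b ≠ 0) (hab : a + b = 1) :
    klDiv (a • μ₁ + b • μ₂) ν ≤ a * klDiv μ₁ ν + b * klDiv μ₂ ν := by
  by_cases h₁ : μ₁ ≪ ν
  swap; · simp [h₁, ha]
  by_cases h₂ : μ₂ ≪ ν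
  swap; · simp [h₂, hb]
  have hmix : a • μ₁ + b • μ₂ ≪ ν := (h₁.smul_left a).add_left (h₂.smul_left b)
  rw [klDiv_eq_lintegral_klFun_of_ac hmix, klDiv_eq_lintegral_klFun_of_ac h₁,
    klDiv_eq_lintegral_klFun_of_ac h₂, ← lintegral_const_mul' _ _ ENNReal.coe_ne_top,
    ← lintegral_const_mul' _ _ ENNReal.coe_ne_top, ← lintegral_add_left (by fun_prop)]
  refine lintegral_mono_ae ?_
  filter_upwards [rnDeriv_smul_add_smul (μ₁ := μ₁) (μ₂ := μ₂) (ν := ν) a b,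
    μ₁.rnDeriv_lt_top ν, μ₂.rnDeriv_lt_top ν] with x hx hlt₁ hlt₂
  set f := (μ₁.rnDeriv ν x).toReal
  set g := (μ₂.rnDeriv ν x).toReal
  have hconv : klFun (a * f + b * g) ≤ a * klFun f + b * klFun g :=
    convexOn_klFun.2 (mem_Ici.2 ENNReal.toReal_nonneg) (mem_Ici.2 ENNReal.toReal_nonneg)
      a.2 b.2 (congrArg NNReal.toReal hab)
  have hf := klFun_nonneg (x := f) ENNReal.toReal_nonneg
  have hg := klFun_nonneg (x := g) ENNReal.toReal_nonneg
  rw [hx, ENNReal.toReal_add (by finiteness) (by finiteness), ENNReal.toReal_mul,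
    ENNReal.toReal_mul, ENNReal.coe_toReal, ENNReal.coe_toReal]
  calc ENNReal.ofReal (klFun (a * f + b * g))
      ≤ ENNReal.ofReal (a * klFun f + b * klFun g) := ENNReal.ofReal_le_ofReal hconv
    _ = a * ENNReal.ofReal (klFun f) + b * ENNReal.ofReal (klFun g) := by
      rw [ENNReal.ofReal_add (by positivity) (by positivity), ENNReal.ofReal_mul a.coe_nonneg,
        ENNReal.ofReal_mul b.coe_nonneg, ENNReal.ofReal_coe_nnreal, ENNReal.ofReal_coe_nnreal]

end KLDivConvex

lemma isProbabilityMeasure_smul_add_smul {α : Type*} [MeasurableSpace α] {μ₁ μ₂ : Measure α}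
    [IsProbabilityMeasure μ₁] [IsProbabilityMeasure μ₂] {a b : ℝ≥0} (hab : a + b = 1) :
    IsProbabilityMeasure (a • μ₁ + b • μ₂) :=
  ⟨by simp [← ENNReal.coe_add, hab]⟩

-- Mathlib's `klDiv` carries the extra term `ν univ - ζ univ`, which vanishes here.
lemma KL_eq_klDiv (ζ ν : Measure ℝ) [IsProbabilityMeasure ζ] [IsProbabilityMeasure ν] :
    KL ζ ν = klDiv ζ ν := by
  by_cases h : ζ ≪ ν ∧ Integrable (fun x ↦ Real.log (ζ.rnDeriv ν x).toReal) ζ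
  · rw [KL, if_pos h, klDiv_of_ac_of_integrable h.1 h.2]
    simp [llr_def]
  · rw [KL, if_neg h, klDiv_eq_top_iff.2 fun h₁ h₂ ↦ h ⟨h₁, h₂⟩]

lemma llr_cond_ae_eq {α : Type*} [MeasurableSpace α] {ν : Measure α} [IsFiniteMeasure ν]
    {s : Set α} (hs : MeasurableSet s) :
    llr (ν[|s]) ν =ᵐ[ν[|s]] fun _ ↦ Real.log ((ν s)⁻¹).toReal := by
  rcases eq_or_ne (ν s) 0 with hs0 | hs0
  · simp [cond_eq_zero_of_meas_eq_zero hs0, EventuallyEq]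
  have hdens : (ν[|s]).rnDeriv ν =ᵐ[ν] fun x ↦ (ν s)⁻¹ * s.indicator 1 x := by
    filter_upwards [Measure.rnDeriv_smul_left_of_ne_top (ν.restrict s) ν
      (ENNReal.inv_ne_top.2 hs0), Measure.rnDeriv_restrict_self ν hs] with x h₁ h₂
    rw [ProbabilityTheory.cond, h₁, Pi.smul_apply, h₂, smul_eq_mul]
  filter_upwards [cond_absolutelyContinuous.ae_le hdens, ae_cond_mem hs] with x hx hxs
  simp [llr_def, hx, hxs]

lemma klDiv_cond_ne_top {α : Type*} [MeasurableSpace α] {ν : Measure α} [IsFiniteMeasure ν]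
    {s : Set α} (hs : MeasurableSet s) : klDiv (ν[|s]) ν ≠ ∞ :=
  klDiv_ne_top cond_absolutelyContinuous ((integrable_const _).congr (llr_cond_ae_eq hs).symm)

section Pcc

variable {ζ ζ₁ ζ₂ ν : Measure ℝ}

lemma ae_mem_Icc_of_mem_Pcc (hζ : ζ ∈ Pcc) : ∀ᵐ x ∂ζ, x ∈ Icc (0 : ℝ) 1 :=
  ae_iff.2 hζ.2

lemma integrable_id_of_mem_Pcc (hζ : ζ ∈ Pcc) : Integrable (fun x : ℝ ↦ x) ζ := by
  have := hζ.1
  refine (integrable_const (1 : ℝ)).mono' (by fun_prop) ?_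
  filter_upwards [ae_mem_Icc_of_mem_Pcc hζ] with x hx
  rw [Real.norm_eq_abs, abs_le]
  exact ⟨by linarith [hx.1], hx.2⟩

lemma Emean_le_of_ae_le (hζ : ζ ∈ Pcc) {t : ℝ} (h : ∀ᵐ x ∂ζ, x ≤ t) : Emean ζ ≤ t := by
  have := hζ.1
  simpa [Emean] using integral_mono_ae (integrable_id_of_mem_Pcc hζ) (integrable_const t) h

lemma le_Emean_of_ae_le (hζ : ζ ∈ Pcc) {t : ℝ} (h : ∀ᵐ x ∂ζ, t ≤ x) : t ≤ Emean ζ := by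
  have := hζ.1
  simpa [Emean] using integral_mono_ae (integrable_const t) (integrable_id_of_mem_Pcc hζ) h

lemma smul_add_smul_mem_Pcc {a b : ℝ≥0} (hab : a + b = 1) (hζ₁ : ζ₁ ∈ Pcc) (hζ₂ : ζ₂ ∈ Pcc) :
    a • ζ₁ + b • ζ₂ ∈ Pcc := by
  have := hζ₁.1
  have := hζ₂.1
  exact ⟨isProbabilityMeasure_smul_add_smul hab, by simp [hζ₁.2, hζ₂.2]⟩

lemma Emean_smul_add_smul (hζ₁ : ζ₁ ∈ Pcc) (hζ₂ : ζ₂ ∈ Pcc) (a b : ℝ≥0) :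
    Emean (a • ζ₁ + b • ζ₂) = a * Emean ζ₁ + b * Emean ζ₂ := by
  have := hζ₁.1
  have := hζ₂.1
  rw [Emean, integral_add_measure ((integrable_id_of_mem_Pcc hζ₁).smul_measure_nnreal)
    ((integrable_id_of_mem_Pcc hζ₂).smul_measure_nnreal), integral_smul_nnreal_measure,
    integral_smul_nnreal_measure]
  rfl

lemma cond_mem_Pcc (hν : ν ∈ Pcc) {s : Set ℝ} (hs : ν s ≠ 0) : ν[|s] ∈ Pcc :=
  have := hν.1
  ⟨cond_isProbabilityMeasure hs, cond_absolutelyContinuous hν.2⟩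

end Pcc

section Support

variable {ζ ν : Measure ℝ}

lemma msupport_eq_support (ν : Measure ℝ) : msupport ν = ν.support := by
  ext x
  simp [msupport, Measure.mem_support_iff_forall, pos_iff_ne_zero]

lemma bddBelow_msupport (hν : ν ∈ Pcc) : BddBelow (msupport ν) := by
  rw [msupport_eq_support]
  exact bddBelow_Icc.mono (Measure.support_subset_of_isClosed isClosed_Icc
    (ae_mem_Icc_of_mem_Pcc hν))

lemma mMin_mem_msupport (hν : ν ∈ Pcc) : mMin ν ∈ msupport ν := by
  have := hν.1
  have hne : (msupport ν).Nonempty := by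
    rw [msupport_eq_support]
    exact Measure.nonempty_support (IsProbabilityMeasure.ne_zero ν)
  refine IsClosed.csInf_mem ?_ hne (bddBelow_msupport hν)
  rw [msupport_eq_support]
  exact Measure.isClosed_support

lemma measure_Iio_mMin (hν : ν ∈ Pcc) : ν (Iio (mMin ν)) = 0 := by
  refine measure_mono_null ?_ Measure.measure_compl_support
  intro x hx hxs
  rw [← msupport_eq_support] at hxs
  exact (csInf_le (bddBelow_msupport hν) hxs).not_gt hx

lemma measure_Iio_ne_zero_of_mMin_lt (hν : ν ∈ Pcc) {t : ℝ} (ht : mMin ν < t) :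
    ν (Iio t) ≠ 0 :=
  mMin_mem_msupport hν _ (Iio_mem_nhds ht)

lemma mMin_le_Emean (hν : ν ∈ Pcc) (hζ : ζ ∈ Pcc) (hac : ζ ≪ ν) : mMin ν ≤ Emean ζ := by
  refine le_Emean_of_ae_le hζ (ae_iff.2 ?_)
  simpa only [not_le, Iio] using hac (measure_Iio_mMin hν)

end Support

section Linf

variable {ν : Measure ℝ}

lemma absolutelyContinuous_of_KL_ne_top {ζ ν : Measure ℝ} (h : KL ζ ν ≠ ⊤) : ζ ≪ ν := by
  unfold KL at h
  split_ifs at h with hac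
  · exact hac.1
  · exact absurd rfl h

lemma KL_smul_add_smul_le {ζ₁ ζ₂ : Measure ℝ} [IsProbabilityMeasure ζ₁]
    [IsProbabilityMeasure ζ₂] [IsProbabilityMeasure ν] {a b : ℝ≥0} (ha : a ≠ 0) (hb : b ≠ 0)
    (hab : a + b = 1) : KL (a • ζ₁ + b • ζ₂) ν ≤ a * KL ζ₁ ν + b * KL ζ₂ ν := by
  have := isProbabilityMeasure_smul_add_smul (μ₁ := ζ₁) (μ₂ := ζ₂) hab
  simpa only [KL_eq_klDiv] using klDiv_smul_add_smul_le (ν := ν) ha hb hab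

lemma Linflt_Pcc_ne_top_of_mMin_lt (hν : ν ∈ Pcc) {x : ℝ} (hx : mMin ν < x) :
    Linflt Pcc x ν ≠ ⊤ := by
  obtain ⟨t, hmt, htx⟩ := exists_between hx
  have hρ := cond_mem_Pcc hν (measure_Iio_ne_zero_of_mMin_lt hν hmt)
  have := hν.1
  have := hρ.1
  have hmean : Emean (ν[|Iio t]) < x :=
    (Emean_le_of_ae_le hρ ((ae_cond_mem measurableSet_Iio).mono fun _ h ↦ le_of_lt h)).trans_lt htx
  refine ne_top_of_le_ne_top ?_ (biInf_le _ ⟨hρ, hmean⟩)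
  rw [KL_eq_klDiv]
  exact klDiv_cond_ne_top measurableSet_Iio

lemma Linflt_Pcc_smul_add_smul_le [IsProbabilityMeasure ν] {a b : ℝ≥0} (ha : a ≠ 0)
    (hb : b ≠ 0) (hab : a + b = 1) (x y : ℝ) :
    Linflt Pcc (a * x + b * y) ν ≤ a * Linflt Pcc x ν + b * Linflt Pcc y ν := by
  simp_rw [Linflt, ENNReal.mul_iInf_of_ne (ENNReal.coe_ne_zero.2 ha) ENNReal.coe_ne_top,
    ENNReal.mul_iInf_of_ne (ENNReal.coe_ne_zero.2 hb) ENNReal.coe_ne_top, ENNReal.iInf_add,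
    ENNReal.add_iInf]
  refine le_iInf₂ fun ζ₁ hζ₁ ↦ le_iInf₂ fun ζ₂ hζ₂ ↦ ?_
  have hmean : Emean (a • ζ₁ + b • ζ₂) < a * x + b * y := by
    rw [Emean_smul_add_smul hζ₁.1 hζ₂.1]
    have ha' : (0 : ℝ) < a := NNReal.coe_pos.2 (pos_iff_ne_zero.2 ha)
    have hb' : (0 : ℝ) < b := NNReal.coe_pos.2 (pos_iff_ne_zero.2 hb)
    exact add_lt_add (mul_lt_mul_of_pos_left hζ₁.2 ha') (mul_lt_mul_of_pos_left hζ₂.2 hb')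
  have := hζ₁.1.1
  have := hζ₂.1.1
  refine (biInf_le _ ?_).trans (KL_smul_add_smul_le ha hb hab)
  exact ⟨smul_add_smul_mem_Pcc hab hζ₁.1 hζ₂.1, hmean⟩

lemma convexOn_toReal_Linflt_Pcc (hν : ν ∈ Pcc) :
    ConvexOn ℝ (Ioi (mMin ν)) fun x ↦ (Linflt Pcc x ν).toReal := by
  have := hν.1
  refine convexOn_iff_forall_pos.2 ⟨convex_Ioi _, fun x hx y hy a b ha hb hab ↦ ?_⟩
  lift a to ℝ≥0 using ha.le
  lift b to ℝ≥0 using hb.le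
  have hx' := Linflt_Pcc_ne_top_of_mMin_lt hν hx
  have hy' := Linflt_Pcc_ne_top_of_mMin_lt hν hy
  have key := Linflt_Pcc_smul_add_smul_le (ν := ν) (NNReal.coe_pos.1 ha).ne'
    (NNReal.coe_pos.1 hb).ne' (by exact_mod_cast hab) x y
  calc (Linflt Pcc (a • x + b • y) ν).toReal
      ≤ (a * Linflt Pcc x ν + b * Linflt Pcc y ν).toReal := ENNReal.toReal_mono (by finiteness) key
    _ = a • (Linflt Pcc x ν).toReal + b • (Linflt Pcc y ν).toReal := by
      rw [ENNReal.toReal_add (by finiteness) (by finiteness)]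
      simp [NNReal.smul_def]

lemma continuousOn_Linflt_Pcc (hν : ν ∈ Pcc) :
    ContinuousOn (fun x ↦ Linflt Pcc x ν) (Ioi (mMin ν)) := by
  refine (ENNReal.continuous_ofReal.comp_continuousOn
    ((convexOn_toReal_Linflt_Pcc hν).continuousOn isOpen_Ioi)).congr fun x hx ↦ ?_
  exact (ENNReal.ofReal_toReal (Linflt_Pcc_ne_top_of_mMin_lt hν hx)).symm

lemma Linfle_Pcc_eq_top_of_lt_mMin (hν : ν ∈ Pcc) {x : ℝ} (hx : x < mMin ν) :
    Linfle Pcc x ν = ⊤ := by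
  refine iInf₂_eq_top.2 fun ζ hζ ↦ ?_
  by_contra hKL
  exact (mMin_le_Emean hν hζ.1 (absolutelyContinuous_of_KL_ne_top hKL)).not_gt (hζ.2.trans_lt hx)

lemma Linfle_le_Linflt (D : Set (Measure ℝ)) (x : ℝ) (ν : Measure ℝ) :
    Linfle D x ν ≤ Linflt D x ν :=
  biInf_mono fun _ hζ ↦ ⟨hζ.1, hζ.2.le⟩

lemma Linflt_le_Linfle_of_continuousWithinAt {D : Set (Measure ℝ)} {x : ℝ}
    (h : ContinuousWithinAt (fun y ↦ Linflt D y ν) (Ioi x) x) : Linflt D x ν ≤ Linfle D x ν :=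
  le_of_tendsto h <| eventually_nhdsWithin_of_forall fun _ hy ↦
    biInf_mono fun _ hζ ↦ ⟨hζ.1, hζ.2.trans_lt hy⟩

end Linf

/-- For the model `P[0,1]` and `ν ∈ P[0,1]` with `m(ν)` the minimum of its closed support:
`x ↦ Linf<(x,ν)` is finite and continuous on `(m(ν), +∞)`, and `Linf<(μ,ν) = Linf≤(μ,ν)`
for every `μ ≠ m(ν)`. -/
theorem Linflt_continuous_and_eq_Linfle (ν : Measure ℝ) (hν : ν ∈ Pcc) :
    (∀ x ∈ Set.Ioi (mMin ν), Linflt Pcc x ν ≠ ⊤) ∧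
    ContinuousOn (fun x => Linflt Pcc x ν) (Set.Ioi (mMin ν)) ∧
    (∀ μ : ℝ, μ ≠ mMin ν → Linflt Pcc μ ν = Linfle Pcc μ ν) := by
  have hcont := continuousOn_Linflt_Pcc hν
  refine ⟨fun x hx ↦ Linflt_Pcc_ne_top_of_mMin_lt hν hx, hcont,
    fun μ hμ ↦ le_antisymm ?_ (Linfle_le_Linflt Pcc μ ν)⟩
  rcases hμ.lt_or_gt with hlt | hgt
  · rw [Linfle_Pcc_eq_top_of_lt_mMin hν hlt]
    exact le_top
  · exact Linflt_le_Linfle_of_continuousWithinAt ((hcont μ hgt).mono (Ioi_subset_Ioi hgt.le))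

end
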